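/- arXiv:2210.04504 — 4 statements merged into one kernel-verified Lean document; each statement's English description precedes it below -/
import Mathlib

section
/- (Existence of an admissible sequence.) Let U be an invertible N×N complex matrix and let Λ₀⁰ ⊋ Λ₀¹ ⊋ ⋯ ⊋ Λ₀ᵏ be a strictly decreasing chain of subsets of column indices {1,…,N} with |Λ₀^{i−1}| = |Λ₀^{i}| + 1 for each i = 1,…,k. Then there exists a strictly increasing chain of row-index subsets V₀ ⊊ V₁ ⊊ ⋯ ⊊ V_k ⊆ {1,…,N} such that: (1) for each 0 ≤ i ≤ k, |V_i| + |Λ₀^{i}| = N and the square submatrix U_{V_i^c, Λ₀^{i}} (rows in the complement of V_i, columns in Λ₀^{i}) is invertible; and (2) for each 1 ≤ i ≤ k, V_i \ V_{i−1} is a singleton. -/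
open Matrix

/-- Reindexing the coordinate space by an equivalence preserves linear independence. -/
lemma li_funLeft {m n ι : Type*} (e : m ≃ n) (v : ι → n → ℂ) :
    LinearIndependent ℂ (fun i => (v i) ∘ e) ↔ LinearIndependent ℂ v := by
  constructor
  · intro h
    have := h.map' (LinearEquiv.funCongrLeft ℂ ℂ e.symm).toLinearMap (LinearEquiv.ker _)
    convert this using 1
    funext i; ext x
    simp [LinearEquiv.funCongrLeft, LinearMap.funLeft]
    all_goals rfl
  · intro h
    have := h.map' (LinearEquiv.funCongrLeft ℂ ℂ e).toLinearMap (LinearEquiv.ker _)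
    convert this using 1
    all_goals rfl

/-- From a linearly independent family of `card ι` vectors in `ℂ^κ`, one can select
`card ι` coordinates on which the family remains linearly independent. -/
lemma exists_finset_cols {ι κ : Type*} [Fintype ι] [Fintype κ] [DecidableEq κ]
    (v : ι → κ → ℂ) (hv : LinearIndependent ℂ v) :
    ∃ S : Finset κ, S.card = Fintype.card ι ∧
      LinearIndependent ℂ (fun i => fun s : {x // x ∈ S} => v i s.val) := by
  classical
  set M : Matrix ι κ ℂ := Matrix.of v with hM
  have hvM : LinearIndependent ℂ M := hv
  have hrank : M.rank = Fintype.card ι := hvM.rank_matrix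
  obtain ⟨b, hbt, hspan, hbli⟩ := exists_linearIndependent ℂ (Set.range Mᵀ)
  have hbfin : b.Finite := by
    have : Finite ↥b := hbli.finite
    exact Set.toFinite b
  haveI : Fintype ↥b := hbfin.fintype
  have hbcard : b.toFinset.card = Fintype.card ι := by
    rw [← finrank_span_set_eq_card hbli, hspan, show Set.range Mᵀ = Set.range M.col from rfl,
      ← Matrix.rank_eq_finrank_span_cols, hrank]
  have hchoice : ∀ x : ↥b, ∃ kk : κ, Mᵀ kk = x.val := fun x => hbt x.2
  choose f hf using hchoice
  have hfinj : Function.Injective f := by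
    intro x y hxy
    have : (x : ι → ℂ) = (y : ι → ℂ) := by rw [← hf x, ← hf y, hxy]
    exact Subtype.ext this
  refine ⟨Finset.image f Finset.univ, ?_, ?_⟩
  · rw [Finset.card_image_of_injective _ hfinj, Finset.card_univ, ← hbcard,
      Set.toFinset_card]
  · set S : Finset κ := Finset.image f Finset.univ with hS
    set g : ↥b ≃ {x // x ∈ S} :=
      Equiv.ofBijective (fun x => ⟨f x, Finset.mem_image_of_mem f (Finset.mem_univ x)⟩)
        ⟨fun a b' h => hfinj (congrArg Subtype.val h), by
          rintro ⟨s, hs⟩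
          obtain ⟨x, -, hx⟩ := Finset.mem_image.mp hs
          exact ⟨x, Subtype.ext hx⟩⟩ with hg
    have hgval : ∀ x : ↥b, (g x).val = f x := fun x => rfl
    have hcols : LinearIndependent ℂ (fun s : {x // x ∈ S} => Mᵀ s.val) := by
      have h1 : LinearIndependent ℂ (fun x : ↥b => Mᵀ (f x)) := by
        have he : (fun x : ↥b => Mᵀ (f x)) = fun x : ↥b => (x : ι → ℂ) :=
          funext fun x => hf x
        rw [he]; exact hbli
      have h2 := h1.comp g.symm g.symm.injective
      convert h2 using 1
      funext s
      simp only [Function.comp]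
      rw [← hgval (g.symm s), g.apply_symm_apply]
    have hcardS : Fintype.card {x // x ∈ S} = Fintype.card ι := by
      rw [Fintype.card_coe, Finset.card_image_of_injective _ hfinj, Finset.card_univ,
        ← hbcard, Set.toFinset_card]
    set q : ι ≃ {x // x ∈ S} := (Fintype.equivOfCardEq hcardS).symm with hq
    set B : Matrix ι ι ℂ := Matrix.of fun i i' => M i (q i').val with hB
    have hBcols : LinearIndependent ℂ (fun i' => Bᵀ i') := by
      have := hcols.comp q q.injective
      convert this using 1
      rfl
    have hBunit : IsUnit B := Matrix.linearIndependent_cols_iff_isUnit.mp hBcols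
    have hBrows : LinearIndependent ℂ (fun i => B i) :=
      Matrix.linearIndependent_rows_iff_isUnit.mpr hBunit
    have := (li_funLeft q.symm (fun i => B i)).mpr hBrows
    convert this using 1
    funext i
    ext s
    simp only [Function.comp, hB, Matrix.of_apply]
    rw [q.apply_symm_apply]
    rfl

/-- `SubmatrixIsUnit U R C` says that the submatrix of `U` with rows indexed by the
finset `R` and columns indexed by the finset `C` is a square invertible matrix
(invertibility is expressed via any bijection identifying the two index sets;
it does not depend on the choice of bijection). -/
def SubmatrixIsUnit {N : ℕ} (U : Matrix (Fin N) (Fin N) ℂ)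
    (R C : Finset (Fin N)) : Prop :=
  ∃ e : {i : Fin N // i ∈ C} ≃ {i : Fin N // i ∈ R},
    IsUnit (Matrix.det (Matrix.of fun i j : {i : Fin N // i ∈ C} => U (e i).val j.val))

lemma submatrixIsUnit_iff_li {N : ℕ} (U : Matrix (Fin N) (Fin N) ℂ)
    {R C : Finset (Fin N)} (hcard : R.card = C.card) :
    SubmatrixIsUnit U R C ↔
      LinearIndependent ℂ
        (fun j : {i : Fin N // i ∈ C} => fun r : {i : Fin N // i ∈ R} => U r.val j.val) := by
  have hc : Fintype.card {i : Fin N // i ∈ C} = Fintype.card {i : Fin N // i ∈ R} := by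
    simp [Fintype.card_coe, hcard]
  have key : ∀ e : {i : Fin N // i ∈ C} ≃ {i : Fin N // i ∈ R},
      IsUnit (Matrix.det (Matrix.of fun i j : {i : Fin N // i ∈ C} => U (e i).val j.val)) ↔
      LinearIndependent ℂ
        (fun j : {i : Fin N // i ∈ C} => fun r : {i : Fin N // i ∈ R} => U r.val j.val) := by
    intro e
    rw [← Matrix.isUnit_iff_isUnit_det, ← Matrix.linearIndependent_cols_iff_isUnit,
      ← li_funLeft e (fun j : {i : Fin N // i ∈ C} => fun r : {i : Fin N // i ∈ R} => U r.val j.val)]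
    constructor
    · intro h; convert h using 1 <;> rfl
    · intro h; convert h using 1 <;> rfl
  constructor
  · rintro ⟨e, he⟩
    exact (key e).mp he
  · intro h
    exact ⟨Fintype.equivOfCardEq hc, (key _).mpr h⟩

/-- Shrinking the column set of an invertible submatrix: a suitable subset of the rows
works for any subset of the columns. -/
lemma shrink {N : ℕ} (U : Matrix (Fin N) (Fin N) ℂ) {C D R : Finset (Fin N)}
    (hCD : C ⊆ D) (hcard : R.card = D.card) (h : SubmatrixIsUnit U R D) :
    ∃ R' : Finset (Fin N), R' ⊆ R ∧ R'.card = C.card ∧ SubmatrixIsUnit U R' C := by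
  classical
  rw [submatrixIsUnit_iff_li U hcard] at h
  have hres : LinearIndependent ℂ
      (fun j : {i : Fin N // i ∈ C} => fun r : {i : Fin N // i ∈ R} => U r.val j.val) := by
    have := h.comp (fun j : {i : Fin N // i ∈ C} => (⟨j.1, hCD j.2⟩ : {i : Fin N // i ∈ D}))
      (fun a b hab => Subtype.ext (congrArg (fun x : {i : Fin N // i ∈ D} => x.val) hab))
    exact this
  obtain ⟨S, hScard, hSli⟩ := exists_finset_cols _ hres
  refine ⟨S.image Subtype.val, ?_, ?_, ?_⟩
  · intro x hx
    obtain ⟨s, -, rfl⟩ := Finset.mem_image.mp hx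
    exact s.2
  · rw [Finset.card_image_of_injective _ Subtype.val_injective, hScard, Fintype.card_coe]
  · have hsub : S.image Subtype.val ⊆ R := by
      intro x hx
      obtain ⟨s, -, rfl⟩ := Finset.mem_image.mp hx
      exact s.2
    rw [submatrixIsUnit_iff_li U (by
      rw [Finset.card_image_of_injective _ Subtype.val_injective, hScard, Fintype.card_coe])]
    set ψ : {x : Fin N // x ∈ S.image Subtype.val} ≃ {s : {i : Fin N // i ∈ R} // s ∈ S} :=
      { toFun := fun r => ⟨⟨r.1, hsub r.2⟩, by
          obtain ⟨s, hs, hval⟩ := Finset.mem_image.mp r.2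
          have : s = ⟨r.1, hsub r.2⟩ := Subtype.ext hval
          exact this ▸ hs⟩
        invFun := fun s => ⟨s.1.1, Finset.mem_image_of_mem _ s.2⟩
        left_inv := fun r => rfl
        right_inv := fun s => rfl } with hψ
    have := (li_funLeft ψ (fun j : {i : Fin N // i ∈ C} =>
      fun s : {s : {i : Fin N // i ∈ R} // s ∈ S} => U s.1.1 j.1)).mpr hSli
    convert this using 1
    rfl

/-- **Existence of an admissible sequence.**
Let `U` be an invertible `N×N` complex matrix and let
`Λ₀⁰ ⊋ Λ₀¹ ⊋ ⋯ ⊋ Λ₀ᵏ` be a strictly decreasing chain of subsets of column indices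
with `|Λ₀^{i−1}| = |Λ₀^{i}| + 1` for `i = 1,…,k`.  Then there exists a strictly
increasing chain of row-index sets `V₀ ⊊ V₁ ⊊ ⋯ ⊊ V_k` such that
(1) for each `0 ≤ i ≤ k`, `V_i` is a uniqueness set w.r.t. `Λ₀ⁱ`, i.e.
`|V_i| + |Λ₀ⁱ| = N` and `U_{V_iᶜ, Λ₀ⁱ}` is invertible; and
(2) for each `1 ≤ i ≤ k`, `V_i \ V_{i−1}` is a singleton. -/
theorem exists_admissible_sequence (N k : ℕ)
    (U : Matrix (Fin N) (Fin N) ℂ) (hU : IsUnit U.det)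
    (Λ : ℕ → Finset (Fin N))
    (hchain : ∀ i, 1 ≤ i → i ≤ k → Λ i ⊂ Λ (i - 1))
    (hΛcard : ∀ i, 1 ≤ i → i ≤ k → (Λ (i - 1)).card = (Λ i).card + 1) :
    ∃ V : ℕ → Finset (Fin N),
      (∀ i, 1 ≤ i → i ≤ k → V (i - 1) ⊂ V i) ∧
      (∀ i, i ≤ k → (V i).card + (Λ i).card = N ∧ SubmatrixIsUnit U (V i)ᶜ (Λ i)) ∧
      (∀ i, 1 ≤ i → i ≤ k → ∃ v, V i \ V (i - 1) = {v}) := by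
  classical
  revert hchain hΛcard
  induction k with
  | zero =>
    intro hchain hΛcard
    have huniv : SubmatrixIsUnit U Finset.univ Finset.univ := by
      refine ⟨Equiv.refl _, ?_⟩
      have heq : (Matrix.of fun i j : {i : Fin N // i ∈ (Finset.univ : Finset (Fin N))} =>
          U ((Equiv.refl _) i).val j.val) =
          U.submatrix (Equiv.subtypeUnivEquiv (fun x => Finset.mem_univ x))
            (Equiv.subtypeUnivEquiv (fun x => Finset.mem_univ x)) := rfl
      rw [heq, Matrix.det_submatrix_equiv_self]
      exact hU
    obtain ⟨R₀, hR₀sub, hR₀card, hR₀unit⟩ := shrink U (Finset.subset_univ (Λ 0)) rfl huniv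
    refine ⟨fun _ => R₀ᶜ, ?_, ?_, ?_⟩
    · intro i hi hik; omega
    · intro i hik
      have : i = 0 := Nat.le_zero.mp hik
      subst this
      constructor
      · have h2 : (Λ 0).card ≤ N := by
          have := Finset.card_le_univ (Λ 0)
          simpa [Fintype.card_fin] using this
        simp only [Finset.card_compl, Fintype.card_fin]
        omega
      · simpa [compl_compl] using hR₀unit
    · intro i hi hik; omega
  | succ k ih =>
    intro hchain hΛcard
    obtain ⟨V, hV1, hV2, hV3⟩ :=
      ih (fun i h1 h2 => hchain i h1 (h2.trans (Nat.le_succ k)))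
        (fun i h1 h2 => hΛcard i h1 (h2.trans (Nat.le_succ k)))
    obtain ⟨hVk, hVkunit⟩ := hV2 k le_rfl
    have hΛk : (Λ k).card = (Λ (k + 1)).card + 1 := by
      have := hΛcard (k + 1) (by omega) le_rfl
      simpa using this
    have hΛsub : Λ (k + 1) ⊆ Λ k := by
      have := hchain (k + 1) (by omega) le_rfl
      simpa using this.subset
    have hVkN : (V k).card ≤ N := by
      have := Finset.card_le_univ (V k)
      simpa [Fintype.card_fin] using this
    have hcardcompl : ((V k)ᶜ).card = (Λ k).card := by
      rw [Finset.card_compl, Fintype.card_fin]; omega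
    obtain ⟨R', hR'sub, hR'card, hR'unit⟩ := shrink U hΛsub hcardcompl hVkunit
    have hR'N : R'.card ≤ N := by
      have := Finset.card_le_univ R'
      simpa [Fintype.card_fin] using this
    have hVsub : V k ⊆ R'ᶜ := by
      intro x hx
      simp only [Finset.mem_compl]
      intro hxR'
      have := hR'sub hxR'
      simp only [Finset.mem_compl] at this
      exact this hx
    have hcardR'c : R'ᶜ.card = (V k).card + 1 := by
      rw [Finset.card_compl, Fintype.card_fin]
      omega
    refine ⟨fun i => if i ≤ k then V i else R'ᶜ, ?_, ?_, ?_⟩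
    · intro i hi hik
      by_cases hik' : i ≤ k
      · have h1 : i - 1 ≤ k := by omega
        simpa [hik', h1] using hV1 i hi hik'
      · have hieq : i = k + 1 := by omega
        subst hieq
        have h1 : k + 1 - 1 = k := by omega
        rw [h1]
        simp only [le_refl, if_true, Nat.lt_irrefl]
        have hne : V k ≠ R'ᶜ := by
          intro h
          rw [h] at hcardR'c
          omega
        have : ¬ (k + 1 ≤ k) := by omega
        rw [if_neg this]
        exact HasSubset.Subset.ssubset_of_ne hVsub hne
    · intro i hik
      by_cases hik' : i ≤ k
      · simpa [hik'] using hV2 i hik'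
      · have hieq : i = k + 1 := by omega
        subst hieq
        have hnk : ¬ (k + 1 ≤ k) := by omega
        simp only [if_neg hnk]
        constructor
        · rw [Finset.card_compl, Fintype.card_fin]
          omega
        · simpa [compl_compl] using hR'unit
    · intro i hi hik
      by_cases hik' : i ≤ k
      · have h1 : i - 1 ≤ k := by omega
        simpa [hik', h1] using hV3 i hi hik'
      · have hieq : i = k + 1 := by omega
        subst hieq
        have h1 : k + 1 - 1 = k := by omega
        rw [h1]
        have hnk : ¬ (k + 1 ≤ k) := by omega
        simp only [if_neg hnk, le_refl, if_true]
        have hcard1 : (R'ᶜ \ V k).card = 1 := by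
          rw [Finset.card_sdiff_of_subset hVsub, hcardR'c]
          omega
        exact Finset.card_eq_one.mp hcard1
end

section
/- (Proposition: nonvanishing of E at the new vertex.) Let U be an invertible N×N complex matrix, let Λ₀ᶦ ⊆ {1,…,N} be a set of column indices and λ* ∉ Λ₀ᶦ, and set Λ₀^{i−1} = Λ₀ᶦ ∪ {λ*}. Let V_{i−1} ⊆ {1,…,N} be a uniqueness set with respect to Λ₀^{i−1} (i.e., |V_{i−1}| + |Λ₀^{i−1}| = N and U_{V_{i−1}^c, Λ₀^{i−1}} is invertible), let v* ∉ V_{i−1}, and suppose V_i = V_{i−1} ∪ {v*} is a uniqueness set with respect to Λ₀ᶦ (i.e., |V_i| + |Λ₀ᶦ| = N and U_{V_i^c, Λ₀ᶦ} is invertible). Writing A = U_{V_i^c, Λ₀ᶦ}, α for the column vector (U_{V_i^c, {λ*}}), a for the entry U_{v*, λ*}, and β for the column vector whose conjugate transpose is the row U_{{v*}, Λ₀ᶦ}, one has aᴴ − αᴴ (Aᴴ)⁻¹ β ≠ 0; that is, the entry E_{V_i}(v*) = −αᴴ (Aᴴ)⁻¹ β + aᴴ of the reconstruction row vector is nonzero.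 -/
open Matrix

/-- Transfer of `IsUnit det` along any pair of equivalences. -/
lemma isUnit_det_submatrix_of_isUnit {m n : Type*} [Fintype m] [Fintype n]
    [DecidableEq m] [DecidableEq n] (M : Matrix m m ℂ) (h : IsUnit M.det)
    (r c : n ≃ m) : IsUnit ((M.submatrix r c).det) := by
  have hEq : M.submatrix r c = (M.submatrix r r).submatrix (Equiv.refl n) (c.trans r.symm) := by
    ext i j
    simp [Matrix.submatrix_apply]
  rw [hEq]
  have := Matrix.det_permute' (c.trans r.symm) (M.submatrix r r)
  have h2 : ((M.submatrix r r).submatrix (Equiv.refl n) (c.trans r.symm)).det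
      = (Equiv.Perm.sign (c.trans r.symm) : ℂ) * M.det := by
    rw [show ((Equiv.refl n : n → n) = id) from rfl] at *
    rw [this, Matrix.det_submatrix_equiv_self]
  rw [h2]
  exact (IsUnit.mul_iff.mpr ⟨by
    rcases Int.units_eq_one_or (Equiv.Perm.sign (c.trans r.symm)) with h1 | h1 <;>
      simp [h1], h⟩)

/-- **Nonvanishing of `E` at the new vertex.**
Let `U` be an invertible `N×N` complex matrix, `Λ₀ⁱ` a set of column indices with
`λ* ∉ Λ₀ⁱ`, and `Λ₀^{i−1} = Λ₀ⁱ ∪ {λ*}`.  Let `V_{i−1}` be a uniqueness set w.r.t.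
`Λ₀^{i−1}`, let `v* ∉ V_{i−1}`, and suppose `V_i = V_{i−1} ∪ {v*}` is a uniqueness
set w.r.t. `Λ₀ⁱ`.  Writing `A = U_{V_iᶜ, Λ₀ⁱ}` (presented as a square matrix via any
bijection `e` between `Λ₀ⁱ` and `V_iᶜ`), `α = U_{V_iᶜ,{λ*}}`, `a = U_{v*,λ*}` and
`βᴴ = U_{{v*},Λ₀ⁱ}`, one has `aᴴ − αᴴ (Aᴴ)⁻¹ β ≠ 0`, i.e. the entry
`E_{V_i}(v*) = −αᴴ (Aᴴ)⁻¹ β + aᴴ` of the reconstruction row vector is nonzero. -/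
theorem E_at_new_vertex_ne_zero (N : ℕ)
    (U : Matrix (Fin N) (Fin N) ℂ) (hU : IsUnit U.det)
    (Λ₀ : Finset (Fin N)) (lamStar : Fin N) (hlam : lamStar ∉ Λ₀)
    (Vprev : Finset (Fin N)) (vStar : Fin N) (hv : vStar ∉ Vprev)
    (hprevCard : Vprev.card + (insert lamStar Λ₀).card = N)
    (hprevInv : SubmatrixIsUnit U Vprevᶜ (insert lamStar Λ₀))
    (hcurCard : (insert vStar Vprev).card + Λ₀.card = N)
    (hcurInv : SubmatrixIsUnit U (insert vStar Vprev)ᶜ Λ₀) :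
    ∀ e : {i : Fin N // i ∈ Λ₀} ≃ {i : Fin N // i ∈ (insert vStar Vprev)ᶜ},
      star (U vStar lamStar) -
        (fun i : {i : Fin N // i ∈ Λ₀} => star (U (e i).val lamStar)) ⬝ᵥ
          ((Matrix.of fun i j : {i : Fin N // i ∈ Λ₀} => star (U (e j).val i.val))⁻¹ *ᵥ
            fun j : {i : Fin N // i ∈ Λ₀} => star (U vStar j.val)) ≠ 0 := by
  intro e
  let ι := {i : Fin N // i ∈ Λ₀}
  let ι' := {i : Fin N // i ∈ insert lamStar Λ₀}
  -- the square matrix A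
  set A : Matrix ι ι ℂ := Matrix.of fun i j : ι => U (e i).val j.val with hA
  -- A is invertible
  have hAdet : IsUnit A.det := by
    obtain ⟨e₁, he₁⟩ := hcurInv
    have : A = (Matrix.of fun i j : ι => U (e₁ i).val j.val).submatrix
        (e.trans e₁.symm) (Equiv.refl ι) := by
      ext i j; simp [hA, Matrix.submatrix_apply]
    rw [this]
    exact isUnit_det_submatrix_of_isUnit _ he₁ _ _
  -- blocks
  set B : Matrix ι Unit ℂ := Matrix.of fun i _ => U (e i).val lamStar with hB
  set C : Matrix Unit ι ℂ := Matrix.of fun _ j => U vStar j.val with hC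
  set D : Matrix Unit Unit ℂ := Matrix.of fun _ _ => U vStar lamStar with hD
  -- vStar is in Vprevᶜ, and the e-images too
  have hvc : vStar ∈ Vprevᶜ := Finset.mem_compl.mpr hv
  have hec : ∀ i : ι, (e i).val ∈ Vprevᶜ := fun i => by
    have := (e i).property
    simp only [Finset.mem_compl, Finset.mem_insert, not_or] at this
    exact Finset.mem_compl.mpr this.2
  have hene : ∀ i : ι, (e i).val ≠ vStar := fun i => by
    have := (e i).property
    simp only [Finset.mem_compl, Finset.mem_insert, not_or] at this
    exact this.1
  -- row equivalence ι ⊕ Unit ≃ Vprevᶜ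
  have cardeq : Fintype.card (ι ⊕ Unit) = Fintype.card {i : Fin N // i ∈ Vprevᶜ} := by
    have h1 : (insert lamStar Λ₀).card = Λ₀.card + 1 := Finset.card_insert_of_notMem hlam
    have h2 : (insert vStar Vprev).card = Vprev.card + 1 := Finset.card_insert_of_notMem hv
    have h3 : (Vprevᶜ : Finset (Fin N)).card = N - Vprev.card := by
      simp [Finset.card_compl]
    simp only [Fintype.card_sum, Fintype.card_unique, Fintype.card_coe, ι]
    have hL : Vprev.card ≤ N := by omega
    rw [h3]
    omega
  let g0 : ι ⊕ Unit → {i : Fin N // i ∈ Vprevᶜ} := fun p =>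
    Sum.rec (fun i => ⟨(e i).val, hec i⟩) (fun _ => ⟨vStar, hvc⟩) p
  have g0inj : Function.Injective g0 := by
    rintro (i | _) (j | _) h <;> have h' := congrArg Subtype.val h
    · exact congrArg Sum.inl (e.injective (Subtype.ext h'))
    · exact absurd h' (hene i)
    · exact absurd h'.symm (hene j)
    · rfl
  let g : ι ⊕ Unit ≃ {i : Fin N // i ∈ Vprevᶜ} :=
    Equiv.ofBijective g0 ((Fintype.bijective_iff_injective_and_card g0).mpr ⟨g0inj, cardeq⟩)
  -- column equivalence ι ⊕ Unit ≃ ι'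
  let f0 : ι ⊕ Unit → ι' := fun p =>
    Sum.rec (fun i => ⟨i.val, Finset.mem_insert_of_mem i.property⟩)
      (fun _ => ⟨lamStar, Finset.mem_insert_self _ _⟩) p
  have f0inj : Function.Injective f0 := by
    rintro (i | _) (j | _) h <;> have h' := congrArg Subtype.val h
    · exact congrArg Sum.inl (Subtype.ext h')
    · have h'' : (i : Fin N) = lamStar := h'
      exact absurd (h'' ▸ i.property) hlam
    · have h'' : (j : Fin N) = lamStar := h'.symm
      exact absurd (h'' ▸ j.property) hlam
    · rfl
  have cardeq2 : Fintype.card (ι ⊕ Unit) = Fintype.card ι' := by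
    have h1 : (insert lamStar Λ₀).card = Λ₀.card + 1 := Finset.card_insert_of_notMem hlam
    simp only [Fintype.card_sum, Fintype.card_unique, Fintype.card_coe, ι, ι']
    omega
  let f : ι ⊕ Unit ≃ ι' :=
    Equiv.ofBijective f0 ((Fintype.bijective_iff_injective_and_card f0).mpr ⟨f0inj, cardeq2⟩)
  -- big matrix is invertible
  obtain ⟨e₀, he₀⟩ := hprevInv
  have hM : Matrix.fromBlocks A B C D =
      (Matrix.of fun i j : ι' => U (e₀ i).val j.val).submatrix (g.trans e₀.symm) f := by
    ext p q
    have hg : ∀ p, (e₀ ((g.trans e₀.symm) p)).val = (g p).val := fun p => by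
      simp [Equiv.trans_apply, Equiv.apply_symm_apply]
    rcases p with i | _ <;> rcases q with j | _ <;>
      simp [Matrix.submatrix_apply, hg, g, f, g0, f0, Equiv.ofBijective_apply, hA, hB, hC, hD,
        Matrix.fromBlocks_apply₁₁, Matrix.fromBlocks_apply₁₂, Matrix.fromBlocks_apply₂₁,
        Matrix.fromBlocks_apply₂₂]
  have hMdet : IsUnit (Matrix.fromBlocks A B C D).det := by
    rw [hM]; exact isUnit_det_submatrix_of_isUnit _ he₀ _ _
  -- Schur complement
  have : Invertible A := A.invertibleOfIsUnitDet hAdet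
  rw [Matrix.det_fromBlocks₁₁] at hMdet
  have hSchur : (D - C * ⅟A * B) () () ≠ 0 := by
    intro h0
    have : (D - C * ⅟A * B).det = 0 := by
      rw [Matrix.det_unique]; exact h0
    rw [this, mul_zero] at hMdet
    exact (not_isUnit_zero hMdet)
  rw [Matrix.invOf_eq_nonsing_inv] at hSchur
  -- identify the goal with star of the Schur complement
  have hkey : star (U vStar lamStar) -
      (fun i : ι => star (U (e i).val lamStar)) ⬝ᵥ
        ((Matrix.of fun i j : ι => star (U (e j).val i.val))⁻¹ *ᵥ
          fun j : ι => star (U vStar j.val)) = star ((D - C * A⁻¹ * B) () ()) := by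
    have hAH : (Matrix.of fun i j : ι => star (U (e j).val i.val)) = Aᴴ := by
      ext i j; simp [Matrix.conjTranspose_apply, hA]
    rw [hAH, ← Matrix.conjTranspose_nonsing_inv]
    simp only [Matrix.sub_apply, hD, Matrix.of_apply, star_sub]
    congr 1
    simp only [Matrix.mul_apply, dotProduct, Matrix.mulVec, Matrix.conjTranspose_apply,
      hB, hC, Matrix.of_apply, dotProduct]
    rw [star_sum]
    refine Finset.sum_congr rfl fun i _ => ?_
    rw [Finset.mul_sum, star_mul', star_sum, Finset.sum_mul]
    refine Finset.sum_congr rfl fun j _ => ?_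
    rw [star_mul']
    ring
  rw [hkey]
  exact star_ne_zero.mpr hSchur
end

section
/- (Uniqueness of signals determined on a uniqueness set.) Let U be an invertible N×N complex matrix, Λ₀ ⊆ {1,…,N} a set of column indices, and V₀ ⊆ {1,…,N} a uniqueness set with respect to Λ₀, i.e., |V₀| + |Λ₀| = N and the submatrix U_{V₀^c, Λ₀} is invertible. If x, y ∈ ℂᴺ both satisfy (U_{·,Λ₀})ᴴ x = 0 and (U_{·,Λ₀})ᴴ y = 0, and x and y agree on V₀ (x_{V₀} = y_{V₀}), then x = y. -/
open Matrix

/-- **Uniqueness of signals determined on a uniqueness set.**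
Let `U` be an invertible `N×N` complex matrix, `Λ₀` a set of column indices, and
`V₀` a uniqueness set w.r.t. `Λ₀`, i.e. `|V₀| + |Λ₀| = N` and `U_{V₀ᶜ,Λ₀}` is
invertible.  If `x, y ∈ ℂᴺ` both satisfy `uᴴ_λ x = 0` and `uᴴ_λ y = 0` for every
`λ ∈ Λ₀`, and `x` and `y` agree on `V₀`, then `x = y`. -/
theorem unique_on_uniqueness_set (N : ℕ)
    (U : Matrix (Fin N) (Fin N) ℂ) (hU : IsUnit U.det)
    (Λ₀ V₀ : Finset (Fin N)) (hcard : V₀.card + Λ₀.card = N)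
    (hinv : SubmatrixIsUnit U V₀ᶜ Λ₀)
    (x y : Fin N → ℂ)
    (hx : ∀ lam ∈ Λ₀, ∑ v, star (U v lam) * x v = 0)
    (hy : ∀ lam ∈ Λ₀, ∑ v, star (U v lam) * y v = 0)
    (hagree : ∀ v ∈ V₀, x v = y v) :
    x = y := by
  obtain ⟨e, he⟩ := hinv
  set z : Fin N → ℂ := fun v => x v - y v with hzdef
  have hzV : ∀ v ∈ V₀, z v = 0 := fun v hv => by simp [hzdef, hagree v hv]
  have hz : ∀ lam ∈ Λ₀, ∑ v, star (U v lam) * z v = 0 := by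
    intro lam hlam
    have := hx lam hlam
    have := hy lam hlam
    simp only [hzdef, mul_sub, Finset.sum_sub_distrib]
    rw [hx lam hlam, hy lam hlam, sub_zero]
  -- the submatrix
  set M : Matrix {i : Fin N // i ∈ Λ₀} {i : Fin N // i ∈ Λ₀} ℂ :=
    Matrix.of fun i j => U (e i).val j.val with hM
  set B : Matrix {i : Fin N // i ∈ Λ₀} {i : Fin N // i ∈ Λ₀} ℂ := Mᴴ with hB
  have hBdet : IsUnit B.det := by
    rw [hB, det_conjTranspose]
    exact he.star
  set zc : {i : Fin N // i ∈ Λ₀} → ℂ := fun i => z (e i).val with hzc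
  have hmul : B.mulVec zc = 0 := by
    funext lam
    have hsum : ∑ v, star (U v lam.val) * z v = 0 := hz lam.val lam.property
    have hsplit : ∑ v ∈ V₀ᶜ, star (U v lam.val) * z v
        + ∑ v ∈ V₀, star (U v lam.val) * z v = ∑ v, star (U v lam.val) * z v := by
      have := Finset.sum_add_sum_compl V₀ᶜ (fun v => star (U v lam.val) * z v)
      simpa using this
    have hV0 : ∑ v ∈ V₀, star (U v lam.val) * z v = 0 :=
      Finset.sum_eq_zero fun v hv => by rw [hzV v hv, mul_zero]
    have hcompl : ∑ v ∈ V₀ᶜ, star (U v lam.val) * z v = 0 := by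
      have := hsplit
      rw [hV0, add_zero] at this
      rw [this, hsum]
    have hattach : ∑ i : {i : Fin N // i ∈ V₀ᶜ}, star (U i.val lam.val) * z i.val
        = ∑ v ∈ V₀ᶜ, star (U v lam.val) * z v := by
      rw [← Finset.sum_attach V₀ᶜ (fun v => star (U v lam.val) * z v)]
      exact Finset.sum_congr rfl fun i _ => rfl
    have hre : ∑ i : {i : Fin N // i ∈ Λ₀}, star (U (e i).val lam.val) * z (e i).val
        = ∑ i : {i : Fin N // i ∈ V₀ᶜ}, star (U i.val lam.val) * z i.val :=
      Equiv.sum_comp e (fun i => star (U i.val lam.val) * z i.val)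
    show ∑ i, B lam i * zc i = 0
    calc ∑ i, B lam i * zc i
        = ∑ i : {i : Fin N // i ∈ Λ₀}, star (U (e i).val lam.val) * z (e i).val := rfl
      _ = 0 := by rw [hre, hattach, hcompl]
  have hinj : Function.Injective B.mulVec :=
    mulVec_injective_iff_isUnit.mpr ((isUnit_iff_isUnit_det B).mpr hBdet)
  have hzc0 : zc = 0 := by
    apply hinj
    rw [hmul, mulVec_zero]
  have hzcompl : ∀ v ∈ V₀ᶜ, z v = 0 := by
    intro v hv
    have := congrFun hzc0 (e.symm ⟨v, hv⟩)
    simpa [hzc] using this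
  funext v
  have hz0 : z v = 0 := by
    by_cases hv : v ∈ V₀
    · exact hzV v hv
    · exact hzcompl v (Finset.mem_compl.mpr hv)
  have : x v - y v = 0 := hz0
  exact sub_eq_zero.mp this
end

section
/- (Reduced expression of a graph Fourier coefficient on a uniqueness set.) Let U be an invertible N×N complex matrix with columns u₁,…,u_N, let Λ₀ ⊆ {1,…,N}, and let V₀ ⊆ {1,…,N} be a uniqueness set with respect to Λ₀, i.e., |V₀| + |Λ₀| = N and U_{V₀^c, Λ₀} is invertible. Then for every index λ ∈ {1,…,N} and every vector x ∈ ℂᴺ with (U_{·,Λ₀})ᴴ x = 0, the graph Fourier coefficient uᴴ_λ x equals E_{V₀} x_{V₀}, where E_{V₀} is the row vector of dimension |V₀| given by E_{V₀} = (u_λ)_{V₀}ᴴ − (u_λ)_{V₀^c}ᴴ ((U_{V₀^c,Λ₀})ᴴ)⁻¹ (U_{V₀,Λ₀})ᴴ. -/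
open Matrix

/-- **Reduced expression of a graph Fourier coefficient on a uniqueness set.**
Let `U` be an invertible `N×N` complex matrix with columns `u₁,…,u_N`, `Λ₀` a set
of column indices, and `V₀` a uniqueness set w.r.t. `Λ₀` (`|V₀| + |Λ₀| = N` and
`U_{V₀ᶜ,Λ₀}` invertible).  Then for every `λ` and every `x ∈ ℂᴺ` with
`(U_{·,Λ₀})ᴴ x = 0`, the graph Fourier coefficient `uᴴ_λ x` equals
`E_{V₀} x_{V₀}` where
`E_{V₀} = (u_λ)_{V₀}ᴴ − (u_λ)_{V₀ᶜ}ᴴ ((U_{V₀ᶜ,Λ₀})ᴴ)⁻¹ (U_{V₀,Λ₀})ᴴ`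
(the square matrix `(U_{V₀ᶜ,Λ₀})ᴴ` being presented via any bijection
`e : V₀ᶜ ≃ Λ₀`). -/
theorem gft_coeff_eq_reduced_expression (N : ℕ)
    (U : Matrix (Fin N) (Fin N) ℂ) (hU : IsUnit U.det)
    (Λ₀ V₀ : Finset (Fin N)) (hcard : V₀.card + Λ₀.card = N)
    (hinv : SubmatrixIsUnit U V₀ᶜ Λ₀)
    (x : Fin N → ℂ)
    (hx : ∀ lam ∈ Λ₀, ∑ v, star (U v lam) * x v = 0) :
    ∀ e : {i : Fin N // i ∈ V₀ᶜ} ≃ {i : Fin N // i ∈ Λ₀},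
      ∀ lam : Fin N,
        ∑ v, star (U v lam) * x v =
          ∑ v ∈ V₀, star (U v lam) * x v -
            (fun r : {i : Fin N // i ∈ V₀ᶜ} => star (U r.val lam)) ⬝ᵥ
              ((Matrix.of fun i j : {i : Fin N // i ∈ V₀ᶜ} =>
                  star (U j.val (e i).val))⁻¹ *ᵥ
                fun i : {i : Fin N // i ∈ V₀ᶜ} =>
                  ∑ v ∈ V₀, star (U v (e i).val) * x v) := by
  classical
  intro e lam
  obtain ⟨e₀, hdet⟩ := hinv
  set A : Matrix {i : Fin N // i ∈ V₀ᶜ} {i : Fin N // i ∈ V₀ᶜ} ℂ :=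
    Matrix.of fun i j => star (U j.val (e i).val) with hA
  set M : Matrix {i : Fin N // i ∈ Λ₀} {i : Fin N // i ∈ Λ₀} ℂ :=
    Matrix.of fun i j => U (e₀ i).val j.val with hM
  -- A is invertible
  have hAeq : A = (M.submatrix e₀.symm e)ᴴ := by
    ext i j
    simp [hA, hM, Matrix.conjTranspose_apply, Matrix.submatrix_apply]
  have hXeq : M.submatrix (⇑e₀.symm) (⇑e) =
      (M.submatrix e₀.symm e₀.symm).submatrix id (e.trans e₀) := by
    ext i j
    simp [Matrix.submatrix_apply]
  have hdetA : IsUnit A.det := by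
    rw [hAeq, Matrix.det_conjTranspose, hXeq, Matrix.det_permute',
      Matrix.det_submatrix_equiv_self]
    rw [isUnit_iff_ne_zero, star_ne_zero]
    rcases Int.units_eq_one_or (Equiv.Perm.sign (e.trans e₀)) with h | h <;>
      simpa [h] using hdet.ne_zero
  set y : {i : Fin N // i ∈ V₀ᶜ} → ℂ := fun j => x j.val with hy
  set b : {i : Fin N // i ∈ V₀ᶜ} → ℂ :=
    (fun i => ∑ v ∈ V₀, star (U v (e i).val) * x v) with hb
  have hmul : A *ᵥ (-y) = b := by
    funext i
    have h0 := hx (e i).val (e i).property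
    have hsplit : ∑ v ∈ V₀, star (U v (e i).val) * x v
        + ∑ v ∈ V₀ᶜ, star (U v (e i).val) * x v = 0 := by
      rw [Finset.sum_add_sum_compl]; exact h0
    have hsub : ∑ j : {i : Fin N // i ∈ V₀ᶜ}, star (U j.val (e i).val) * x j.val
        = ∑ v ∈ V₀ᶜ, star (U v (e i).val) * x v :=
      Finset.sum_coe_sort V₀ᶜ (fun v => star (U v (e i).val) * x v)
    have : (A *ᵥ (-y)) i = -∑ v ∈ V₀ᶜ, star (U v (e i).val) * x v := by
      rw [← hsub]
      simp [Matrix.mulVec, dotProduct, hA, hy, mul_neg,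
        Finset.sum_neg_distrib]
    rw [this, hb]
    linear_combination -hsplit
  have hinvb : A⁻¹ *ᵥ b = -y := by
    rw [← hmul, Matrix.mulVec_mulVec, Matrix.nonsing_inv_mul A hdetA,
      Matrix.one_mulVec]
  show _ = _ - _ ⬝ᵥ (A⁻¹ *ᵥ b)
  rw [hinvb]
  have hdot : (fun r : {i : Fin N // i ∈ V₀ᶜ} => star (U r.val lam)) ⬝ᵥ (-y)
      = -∑ v ∈ V₀ᶜ, star (U v lam) * x v := by
    have hsub : ∑ j : {i : Fin N // i ∈ V₀ᶜ}, star (U j.val lam) * x j.val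
        = ∑ v ∈ V₀ᶜ, star (U v lam) * x v :=
      Finset.sum_coe_sort V₀ᶜ (fun v => star (U v lam) * x v)
    rw [← hsub]
    simp [dotProduct, hy, mul_neg, Finset.sum_neg_distrib]
  rw [hdot, sub_neg_eq_add, Finset.sum_add_sum_compl]
end
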